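/- Let (X₁,ρ₁,μ₁) and (X₂,ρ₂,μ₂) be quasimetric spaces with upper doubling measures with dominating functions λ₁, λ₂ and constants C_{λ₁}, C_{λ₂}; let αᵢ > 0, C_Q ≥ 1, C_K ≥ 1, C_H ≥ 0, and let K be a measurable kernel on (X₁×X₂)×(X₁×X₂) satisfying: whenever ρ₁(x₁,x_{Q₁}) ≤ ρ₁(x_{Q₁},y₁)/C_K and ρ₂(x₂,x_{Q₂}) ≤ ρ₂(x_{Q₂},y₂)/C_K, |K((x₁,x₂),y) − K((x_{Q₁},x₂),y) − K((x₁,x_{Q₂}),y) + K((x_{Q₁},x_{Q₂}),y)| ≤ C_H [ρ₁(x₁,x_{Q₁})^{α₁}/(ρ₁(x_{Q₁},y₁)^{α₁} λ₁(x_{Q₁},ρ₁(x_{Q₁},y₁)))] · [ρ₂(x₂,x_{Q₂})^{α₂}/(ρ₂(x_{Q₂},y₂)^{α₂} λ₂(x_{Q₂},ρ₂(x_{Q₂},y₂)))]. Let Q₁ ⊆ B(x_{Q₁}, C_Q ℓ₁) ⊆ X₁ and Q₂ ⊆ B(x_{Q₂}, C_Q ℓ₂) ⊆ X₂ with ℓ₁,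 ℓ₂ > 0, and let U ⊇ B(x_{Q₁}, C_K C_Q ℓ₁) and V ⊇ B(x_{Q₂}, C_K C_Q ℓ₂) be measurable. Let h₁ ∈ L²(μ₁) be supported in Q₁ with ∫ h₁ dμ₁ = 0 and ‖h₁‖_{L²(μ₁)} ≤ 1, and let h₂ ∈ L²(μ₂) be supported in Q₂ with ∫ h₂ dμ₂ = 0 and ‖h₂‖_{L²(μ₂)} ≤ 1; assume the integrand below and its base-point modifications are absolutely integrable. Then |∫_{X₁∖U} ∫_{X₂∖V} ∫_{Q₁} ∫_{Q₂} K((x₁,x₂),(y₁,y₂)) h₁(x₁) h₂(x₂) dμ₂(x₂) dμ₁(x₁) dμ₂(y₂) dμ₁(y₁)| ≤ C' μ₁(Q₁)^{1/2} μ₂(Q₂)^{1/2}, where C' depends only on C_H, C_{λ₁}, C_{λ₂}, α₁, α₂, C_Q and C_K. -/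

import Mathlib

/-!
Since `h₁` and `h₂` have mean zero on `Q₁` and `Q₂`, the three terms in which `K` is evaluated
at `x_{Q₁}` or `x_{Q₂}` integrate to zero, so `K` may be replaced by its double difference.
For `x ∈ Q` and `y ∉ U` we have `ρ(x, x_Q) < C_Q ℓ ≤ ρ(x_Q, y) / C_K`, so the Hölder hypothesis
bounds the double difference by `C_H` times a product of two weights
`R^α / (ρ(x_Q, y)^α λ(x_Q, ρ(x_Q, y)))` with `R = C_K C_Q ℓ`. Splitting `X ∖ B(x_Q, R)` into
the annuli `2^k R ≤ ρ < 2^(k+1) R`, upper doubling bounds the integral of each weight by the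
geometric series `C_λ ∑ 2^(-αk)`, and Cauchy–Schwarz gives `∫_Q |h| ≤ μ(Q)^(1/2)`.
-/

open MeasureTheory Set
open scoped ENNReal

section Prod

variable {α β γ δ : Type*} [MeasurableSpace α] [MeasurableSpace β] [MeasurableSpace γ]
  [MeasurableSpace δ]

/-- Neither `f` nor `g` need be measurable: the dominating functions `λᵢ` are not assumed
measurable, so neither are the weights integrated with this bound. -/
theorem lintegral_prod_mul_le_mul {μ : Measure α} {ν : Measure β} {f : α → ℝ≥0∞}
    {g : β → ℝ≥0∞} {A B : ℝ≥0∞} (hf : ∀ x, f x ≠ ∞) (hfA : ∫⁻ x, f x ∂μ ≤ A)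
    (hgB : ∫⁻ y, g y ∂ν ≤ B) (hB : B ≠ ∞) :
    ∫⁻ z, f z.1 * g z.2 ∂μ.prod ν ≤ A * B :=
  calc ∫⁻ z, f z.1 * g z.2 ∂μ.prod ν ≤ ∫⁻ x, ∫⁻ y, f x * g y ∂ν ∂μ := lintegral_prod_le _
    _ = ∫⁻ x, f x * ∫⁻ y, g y ∂ν ∂μ := lintegral_congr fun x ↦ lintegral_const_mul' _ _ (hf x)
    _ ≤ ∫⁻ x, f x * B ∂μ := by gcongr
    _ = (∫⁻ x, f x ∂μ) * B := lintegral_mul_const' _ _ hB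
    _ ≤ A * B := by gcongr

theorem integral_prod_prod_eq_iterated {E : Type*} [NormedAddCommGroup E] [NormedSpace ℝ E]
    {μ₁ : Measure α} {μ₂ : Measure β} {ν₁ : Measure γ} {ν₂ : Measure δ}
    [SFinite μ₁] [SFinite μ₂] [SFinite ν₁] [SFinite ν₂]
    {f : (α × β) × (γ × δ) → E} (hf : Integrable f ((μ₁.prod μ₂).prod (ν₁.prod ν₂))) :
    ∫ z, f z ∂(μ₁.prod μ₂).prod (ν₁.prod ν₂)
      = ∫ y₁, ∫ y₂, ∫ x₁, ∫ x₂, f ((y₁, y₂), (x₁, x₂)) ∂ν₂ ∂ν₁ ∂μ₂ ∂μ₁ := by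
  rw [integral_prod _ hf, integral_prod _ hf.integral_prod_left]
  refine integral_congr_ae ?_
  filter_upwards [Measure.ae_ae_of_ae_prod hf.prod_right_ae] with y₁ hy₁
  refine integral_congr_ae ?_
  filter_upwards [hy₁] with y₂ hy₂
  exact integral_prod _ hy₂

variable {L : Type*} [RCLike L] {P : Measure α} {ν₁ : Measure γ} {ν₂ : Measure δ}
  [SFinite P] [SFinite ν₁] [SFinite ν₂]

theorem integral_prod_mul_fst_eq_zero {h : γ → L} (hh : ∫ x, h x ∂ν₁ = 0) (F : α → δ → L) :
    ∫ z, h z.2.1 * F z.1 z.2.2 ∂P.prod (ν₁.prod ν₂) = 0 := by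
  by_cases hint : Integrable (fun z ↦ h z.2.1 * F z.1 z.2.2) (P.prod (ν₁.prod ν₂))
  · simp [integral_prod _ hint, integral_prod_mul h, hh]
  · exact integral_undef hint

theorem integral_prod_mul_snd_eq_zero {h : δ → L} (hh : ∫ x, h x ∂ν₂ = 0) (F : α → γ → L) :
    ∫ z, F z.1 z.2.1 * h z.2.2 ∂P.prod (ν₁.prod ν₂) = 0 := by
  by_cases hint : Integrable (fun z ↦ F z.1 z.2.1 * h z.2.2) (P.prod (ν₁.prod ν₂))
  · simp [integral_prod _ hint, integral_prod_mul _ h, hh]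
  · exact integral_undef hint

end Prod

theorem setLIntegral_enorm_le_eLpNorm_mul_measure_rpow {α E : Type*} [MeasurableSpace α]
    [NormedAddCommGroup E] {μ : Measure α} {f : α → E} (hf : AEStronglyMeasurable f μ)
    (s : Set α) :
    ∫⁻ x in s, ‖f x‖ₑ ∂μ ≤ eLpNorm f 2 μ * μ s ^ (1 / 2 : ℝ) := by
  have holder := eLpNorm_le_eLpNorm_mul_rpow_measure_univ (p := 1) (q := 2) (by norm_num)
    (hf.restrict (s := s))
  have hexp : 1 / (1 : ℝ≥0∞).toReal - 1 / (2 : ℝ≥0∞).toReal = 1 / 2 := by norm_num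
  rw [eLpNorm_one_eq_lintegral_enorm, Measure.restrict_apply_univ, hexp] at holder
  exact holder.trans (by gcongr; exact Measure.restrict_le_self)

theorem rpow_div_rpow_le_geometric {α R r : ℝ} (hα : 0 ≤ α) (hR : 0 < R) {k : ℕ}
    (hr : 2 ^ k * R ≤ r) : R ^ α / r ^ α ≤ ((2 : ℝ) ^ (-α)) ^ k := by
  have h2kR : 0 < 2 ^ k * R := by positivity
  calc R ^ α / r ^ α ≤ R ^ α / (2 ^ k * R) ^ α := by gcongr
    _ = ((2 : ℝ) ^ (-α)) ^ k := by
      rw [Real.mul_rpow (by positivity) hR.le, Real.rpow_pow_comm (by norm_num),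
        Real.rpow_neg (by positivity)]
      field_simp

theorem sigmaFinite_of_measure_ball_ne_top {X : Type*} [MeasurableSpace X] {ρ : X → X → ℝ}
    {μ : Measure X} (x₀ : X) (h : ∀ r, 0 < r → μ {y | ρ x₀ y < r} ≠ ∞) : SigmaFinite μ where
  out' := ⟨{
    set := fun n : ℕ ↦ toMeasurable μ {y | ρ x₀ y < n + 1}
    set_mem := fun _ ↦ trivial
    finite := fun n ↦ by
      rw [measure_toMeasurable]
      exact (h _ (by positivity)).lt_top
    spanning := eq_univ_of_forall fun y ↦ mem_iUnion.2
      ⟨⌊ρ x₀ y⌋₊, subset_toMeasurable _ _ (Nat.lt_floor_add_one (ρ x₀ y))⟩ }⟩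

structure IsUpperDoubling {X : Type*} [MeasurableSpace X] (ρ : X → X → ℝ) (μ : Measure X)
    (lam : X → ℝ → ℝ) (C : ℝ) : Prop where
  pos : ∀ x r, 0 < r → 0 < lam x r
  mono : ∀ x r s, 0 < r → r ≤ s → lam x r ≤ lam x s
  doubling : ∀ x r, 0 < r → lam x (2 * r) ≤ C * lam x r
  measure_ball_le : ∀ x r, 0 < r → μ {y | ρ x y < r} ≤ ENNReal.ofReal (lam x r)

noncomputable def tailWeight {X : Type*} (ρ : X → X → ℝ) (lam : X → ℝ → ℝ) (α R : ℝ)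
    (x y : X) : ℝ :=
  R ^ α / (ρ x y ^ α * lam x (ρ x y))

noncomputable def tailConst (C α : ℝ) : ℝ := C / (1 - 2 ^ (-α))

theorem tailConst_pos {C α : ℝ} (hC : 0 < C) (hα : 0 < α) : 0 < tailConst C α :=
  div_pos hC (sub_pos.2 (Real.rpow_lt_one_of_one_lt_of_neg one_lt_two (neg_lt_zero.2 hα)))

namespace IsUpperDoubling

variable {X : Type*} [MeasurableSpace X] {ρ : X → X → ℝ} {μ : Measure X} {lam : X → ℝ → ℝ}
  {C : ℝ}

theorem measure_ball_ne_top (hμ : IsUpperDoubling ρ μ lam C) (x : X) {r : ℝ} (hr : 0 < r) :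
    μ {y | ρ x y < r} ≠ ∞ :=
  ne_top_of_le_ne_top ENNReal.ofReal_ne_top (hμ.measure_ball_le x r hr)

theorem sigmaFinite (hμ : IsUpperDoubling ρ μ lam C) (x₀ : X) : SigmaFinite μ :=
  sigmaFinite_of_measure_ball_ne_top x₀ fun _ ↦ hμ.measure_ball_ne_top x₀

/-- Balls need not be measurable, hence `toMeasurable`. On the annulus
`2^k R ≤ ρ x y < 2^(k+1) R` the weight is at most `2^(-αk) / λ(x, 2^k R)`. -/
theorem ofReal_tailWeight_le_tsum_indicator (hμ : IsUpperDoubling ρ μ lam C) {α R : ℝ}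
    (hα : 0 ≤ α) (hR : 0 < R) (x : X) {y : X} (hy : R ≤ ρ x y) :
    ENNReal.ofReal (tailWeight ρ lam α R x y)
      ≤ ∑' k : ℕ, (toMeasurable μ {y | ρ x y < 2 ^ (k + 1) * R}).indicator
          (fun _ ↦ ENNReal.ofReal (((2 : ℝ) ^ (-α)) ^ k / lam x (2 ^ k * R))) y := by
  obtain ⟨k, hk_le, hk_lt⟩ := exists_nat_pow_near ((one_le_div hR).2 hy) one_lt_two
  rw [le_div_iff₀ hR] at hk_le
  rw [div_lt_iff₀ hR] at hk_lt
  have h2kR : 0 < 2 ^ k * R := by positivity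
  refine le_trans ?_ (ENNReal.le_tsum k)
  rw [indicator_of_mem (subset_toMeasurable μ _ hk_lt), tailWeight, ← div_div]
  exact ENNReal.ofReal_le_ofReal <| div_le_div₀ (by positivity)
    (rpow_div_rpow_le_geometric hα hR hk_le) (hμ.pos _ _ h2kR) (hμ.mono _ _ _ h2kR hk_le)

theorem lintegral_tailWeight_le (hμ : IsUpperDoubling ρ μ lam C) {α R : ℝ} (hα : 0 < α)
    (hR : 0 < R) (x : X) {S : Set X} (hS : MeasurableSet S) (hSR : ∀ y ∈ S, R ≤ ρ x y) :
    ∫⁻ y in S, ENNReal.ofReal (tailWeight ρ lam α R x y) ∂μ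
      ≤ ENNReal.ofReal (tailConst C α) := by
  set q : ℝ := 2 ^ (-α)
  have hq0 : 0 ≤ q := by positivity
  have hq1 : q < 1 := Real.rpow_lt_one_of_one_lt_of_neg one_lt_two (neg_lt_zero.2 hα)
  have hC : 0 ≤ C := nonneg_of_mul_nonneg_left
    ((hμ.pos x _ (by norm_num : (0 : ℝ) < 2 * 1)).le.trans (hμ.doubling x 1 one_pos))
    (hμ.pos x 1 one_pos)
  have hannulus (k : ℕ) :
      ENNReal.ofReal (q ^ k / lam x (2 ^ k * R)) * μ {y | ρ x y < 2 ^ (k + 1) * R}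
        ≤ ENNReal.ofReal (C * q ^ k) := by
    have h2kR : 0 < 2 ^ k * R := by positivity
    have hlam := hμ.pos x _ h2kR
    refine (mul_le_mul_right (hμ.measure_ball_le x _ (by positivity)) _).trans ?_
    rw [← ENNReal.ofReal_mul (by positivity), pow_succ, mul_comm _ (2 : ℝ), mul_assoc]
    refine ENNReal.ofReal_le_ofReal ?_
    calc q ^ k / lam x (2 ^ k * R) * lam x (2 * (2 ^ k * R))
        ≤ q ^ k / lam x (2 ^ k * R) * (C * lam x (2 ^ k * R)) := by
          gcongr; exact hμ.doubling x _ h2kR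
      _ = C * q ^ k := by field_simp
  calc ∫⁻ y in S, ENNReal.ofReal (tailWeight ρ lam α R x y) ∂μ
      ≤ ∫⁻ y in S, ∑' k : ℕ, (toMeasurable μ {y | ρ x y < 2 ^ (k + 1) * R}).indicator
          (fun _ ↦ ENNReal.ofReal (q ^ k / lam x (2 ^ k * R))) y ∂μ :=
        setLIntegral_mono' hS fun y hy ↦
          hμ.ofReal_tailWeight_le_tsum_indicator hα.le hR x (hSR y hy)
    _ ≤ ∑' k : ℕ, ENNReal.ofReal (q ^ k / lam x (2 ^ k * R))
          * μ {y | ρ x y < 2 ^ (k + 1) * R} := by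
        rw [lintegral_tsum fun k ↦
          (measurable_const.indicator (measurableSet_toMeasurable _ _)).aemeasurable]
        refine ENNReal.tsum_le_tsum fun k ↦ ?_
        rw [lintegral_indicator_const (measurableSet_toMeasurable _ _)]
        exact mul_le_mul_right
          ((Measure.restrict_apply_le S _).trans (measure_toMeasurable _).le) _
    _ ≤ ∑' k : ℕ, ENNReal.ofReal (C * q ^ k) := ENNReal.tsum_le_tsum hannulus
    _ = ENNReal.ofReal (tailConst C α) := by
        rw [← ENNReal.ofReal_tsum_of_nonneg (fun k ↦ by positivity)
          ((summable_geometric_of_lt_one hq0 hq1).mul_left C), tsum_mul_left,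
          tsum_geometric_of_lt_one hq0 hq1, tailConst, div_eq_mul_inv]

end IsUpperDoubling

def doubleDiff {X₁ X₂ Y E : Type*} [AddCommGroup E] (K : X₁ × X₂ → Y → E) (a₁ : X₁)
    (a₂ : X₂) (x : X₁ × X₂) (y : Y) : E :=
  K x y - K (a₁, x.2) y - K (x.1, a₂) y + K (a₁, a₂) y

theorem integral_doubleDiff_mul_eq {Y X₁ X₂ L : Type*} [MeasurableSpace Y] [MeasurableSpace X₁]
    [MeasurableSpace X₂] [RCLike L] {P : Measure Y} {ν₁ : Measure X₁} {ν₂ : Measure X₂}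
    [SFinite P] [SFinite ν₁] [SFinite ν₂] {K : X₁ × X₂ → Y → L} (a₁ : X₁) (a₂ : X₂)
    {h₁ : X₁ → L} {h₂ : X₂ → L} (hh₁ : ∫ x, h₁ x ∂ν₁ = 0) (hh₂ : ∫ x, h₂ x ∂ν₂ = 0)
    (hI : Integrable (fun z ↦ K z.2 z.1 * h₁ z.2.1 * h₂ z.2.2) (P.prod (ν₁.prod ν₂)))
    (hI₁ : Integrable (fun z ↦ K (a₁, z.2.2) z.1 * h₁ z.2.1 * h₂ z.2.2) (P.prod (ν₁.prod ν₂)))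
    (hI₂ : Integrable (fun z ↦ K (z.2.1, a₂) z.1 * h₁ z.2.1 * h₂ z.2.2) (P.prod (ν₁.prod ν₂)))
    (hI₁₂ : Integrable (fun z ↦ K (a₁, a₂) z.1 * h₁ z.2.1 * h₂ z.2.2) (P.prod (ν₁.prod ν₂))) :
    ∫ z, doubleDiff K a₁ a₂ z.2 z.1 * (h₁ z.2.1 * h₂ z.2.2) ∂P.prod (ν₁.prod ν₂)
      = ∫ z, K z.2 z.1 * h₁ z.2.1 * h₂ z.2.2 ∂P.prod (ν₁.prod ν₂) := by
  have h₁_zero := integral_prod_mul_fst_eq_zero (P := P) (ν₂ := ν₂) hh₁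
    fun p x₂ ↦ K (a₁, x₂) p * h₂ x₂
  have h₂_zero := integral_prod_mul_snd_eq_zero (P := P) (ν₁ := ν₁) hh₂
    fun p x₁ ↦ K (x₁, a₂) p * h₁ x₁
  have h₁₂_zero := integral_prod_mul_snd_eq_zero (P := P) (ν₁ := ν₁) hh₂
    fun p x₁ ↦ K (a₁, a₂) p * h₁ x₁
  simp only [mul_left_comm (h₁ _), ← mul_assoc] at h₁_zero
  simp only [doubleDiff, sub_mul, add_mul, ← mul_assoc]
  rw [integral_add (by exact (hI.sub hI₁).sub hI₂) hI₁₂, integral_sub (by exact hI.sub hI₁) hI₂,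
    integral_sub hI hI₁, h₁_zero, h₂_zero, h₁₂_zero]
  ring

theorem holder_factor_le {X : Type*} {ρ : X → X → ℝ} {lam : X → ℝ → ℝ} {x₀ x y : X}
    {C_K α r : ℝ} (hlam : ∀ x r, 0 < r → 0 < lam x r) (hC_K : 1 ≤ C_K) (hα : 0 ≤ α)
    (hρ : 0 ≤ ρ x x₀) (hx : ρ x x₀ < r) (hy : C_K * r ≤ ρ x₀ y) :
    ρ x x₀ ≤ ρ x₀ y / C_K ∧ 0 ≤ ρ x x₀ ^ α / (ρ x₀ y ^ α * lam x₀ (ρ x₀ y)) ∧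
      ρ x x₀ ^ α / (ρ x₀ y ^ α * lam x₀ (ρ x₀ y)) ≤ tailWeight ρ lam α (C_K * r) x₀ y := by
  have hr : r ≤ C_K * r := le_mul_of_one_le_left (hρ.trans hx.le) hC_K
  have hy₀ : 0 < ρ x₀ y := (hρ.trans_lt hx).trans_le (hr.trans hy)
  have := hlam x₀ _ hy₀
  refine ⟨(le_div_iff₀ (by positivity)).2 ?_, by positivity, ?_⟩
  · nlinarith
  · unfold tailWeight
    gcongr
    exact hx.le.trans hr

theorem enorm_doubleDiff_le {X₁ X₂ E : Type*} [NormedAddCommGroup E] {ρ₁ : X₁ → X₁ → ℝ}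
    {ρ₂ : X₂ → X₂ → ℝ} {lam₁ : X₁ → ℝ → ℝ} {lam₂ : X₂ → ℝ → ℝ} {K : X₁ × X₂ → X₁ × X₂ → E}
    {xQ₁ : X₁} {xQ₂ : X₂} {C_H C_K α₁ α₂ r₁ r₂ : ℝ} (hC_H : 0 ≤ C_H) (hC_K : 1 ≤ C_K)
    (hα₁ : 0 ≤ α₁) (hα₂ : 0 ≤ α₂) (hlam₁ : ∀ x r, 0 < r → 0 < lam₁ x r)
    (hlam₂ : ∀ x r, 0 < r → 0 < lam₂ x r)
    (hK : ∀ x₁ x₂ y₁ y₂, ρ₁ x₁ xQ₁ ≤ ρ₁ xQ₁ y₁ / C_K → ρ₂ x₂ xQ₂ ≤ ρ₂ xQ₂ y₂ / C_K →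
      ‖doubleDiff K xQ₁ xQ₂ (x₁, x₂) (y₁, y₂)‖
        ≤ C_H * (ρ₁ x₁ xQ₁ ^ α₁ / (ρ₁ xQ₁ y₁ ^ α₁ * lam₁ xQ₁ (ρ₁ xQ₁ y₁)))
          * (ρ₂ x₂ xQ₂ ^ α₂ / (ρ₂ xQ₂ y₂ ^ α₂ * lam₂ xQ₂ (ρ₂ xQ₂ y₂))))
    {x₁ y₁ : X₁} {x₂ y₂ : X₂} (hρ₁ : 0 ≤ ρ₁ x₁ xQ₁) (hρ₂ : 0 ≤ ρ₂ x₂ xQ₂)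
    (hx₁ : ρ₁ x₁ xQ₁ < r₁) (hx₂ : ρ₂ x₂ xQ₂ < r₂)
    (hy₁ : C_K * r₁ ≤ ρ₁ xQ₁ y₁) (hy₂ : C_K * r₂ ≤ ρ₂ xQ₂ y₂) :
    ‖doubleDiff K xQ₁ xQ₂ (x₁, x₂) (y₁, y₂)‖ₑ
      ≤ ENNReal.ofReal C_H * ENNReal.ofReal (tailWeight ρ₁ lam₁ α₁ (C_K * r₁) xQ₁ y₁)
        * ENNReal.ofReal (tailWeight ρ₂ lam₂ α₂ (C_K * r₂) xQ₂ y₂) := by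
  obtain ⟨hclose₁, hnonneg₁, hle₁⟩ := holder_factor_le hlam₁ hC_K hα₁ hρ₁ hx₁ hy₁
  obtain ⟨hclose₂, hnonneg₂, hle₂⟩ := holder_factor_le hlam₂ hC_K hα₂ hρ₂ hx₂ hy₂
  have hW₁ : 0 ≤ tailWeight ρ₁ lam₁ α₁ (C_K * r₁) xQ₁ y₁ := hnonneg₁.trans hle₁
  rw [← ofReal_norm, ← ENNReal.ofReal_mul hC_H, ← ENNReal.ofReal_mul (mul_nonneg hC_H hW₁)]
  refine ENNReal.ofReal_le_ofReal ((hK x₁ x₂ y₁ y₂ hclose₁ hclose₂).trans ?_)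
  gcongr

theorem ae_enorm_doubleDiff_mul_le {X₁ X₂ : Type*} [MeasurableSpace X₁] [MeasurableSpace X₂]
    {ρ₁ : X₁ → X₁ → ℝ} {ρ₂ : X₂ → X₂ → ℝ} {μ₁ : Measure X₁} {μ₂ : Measure X₂}
    {lam₁ : X₁ → ℝ → ℝ} {lam₂ : X₂ → ℝ → ℝ} {K : X₁ × X₂ → X₁ × X₂ → ℂ}
    {xQ₁ : X₁} {xQ₂ : X₂} {C_H C_K α₁ α₂ r₁ r₂ : ℝ}
    {Q₁ U : Set X₁} {Q₂ V : Set X₂} {h₁ : X₁ → ℂ} {h₂ : X₂ → ℂ}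
    (hC_H : 0 ≤ C_H) (hC_K : 1 ≤ C_K) (hα₁ : 0 ≤ α₁) (hα₂ : 0 ≤ α₂)
    (hlam₁ : ∀ x r, 0 < r → 0 < lam₁ x r) (hlam₂ : ∀ x r, 0 < r → 0 < lam₂ x r)
    (hρ₁ : ∀ x y, 0 ≤ ρ₁ x y) (hρ₂ : ∀ x y, 0 ≤ ρ₂ x y)
    (hsymm₁ : ∀ x y, ρ₁ x y = ρ₁ y x) (hsymm₂ : ∀ x y, ρ₂ x y = ρ₂ y x)
    (hK : ∀ x₁ x₂ y₁ y₂, ρ₁ x₁ xQ₁ ≤ ρ₁ xQ₁ y₁ / C_K → ρ₂ x₂ xQ₂ ≤ ρ₂ xQ₂ y₂ / C_K →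
      ‖doubleDiff K xQ₁ xQ₂ (x₁, x₂) (y₁, y₂)‖
        ≤ C_H * (ρ₁ x₁ xQ₁ ^ α₁ / (ρ₁ xQ₁ y₁ ^ α₁ * lam₁ xQ₁ (ρ₁ xQ₁ y₁)))
          * (ρ₂ x₂ xQ₂ ^ α₂ / (ρ₂ xQ₂ y₂ ^ α₂ * lam₂ xQ₂ (ρ₂ xQ₂ y₂))))
    (hQ₁ : MeasurableSet Q₁) (hQ₂ : MeasurableSet Q₂) (hU : MeasurableSet U)
    (hV : MeasurableSet V) (hQ₁sub : Q₁ ⊆ {y | ρ₁ xQ₁ y < r₁})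
    (hQ₂sub : Q₂ ⊆ {y | ρ₂ xQ₂ y < r₂}) (hUsub : {y | ρ₁ xQ₁ y < C_K * r₁} ⊆ U)
    (hVsub : {y | ρ₂ xQ₂ y < C_K * r₂} ⊆ V) :
    ∀ᵐ z ∂((μ₁.restrict Uᶜ).prod (μ₂.restrict Vᶜ)).prod ((μ₁.restrict Q₁).prod (μ₂.restrict Q₂)),
      ‖doubleDiff K xQ₁ xQ₂ z.2 z.1 * (h₁ z.2.1 * h₂ z.2.2)‖ₑ
        ≤ ENNReal.ofReal C_H * ENNReal.ofReal (tailWeight ρ₁ lam₁ α₁ (C_K * r₁) xQ₁ z.1.1)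
            * ENNReal.ofReal (tailWeight ρ₂ lam₂ α₂ (C_K * r₂) xQ₂ z.1.2)
          * (‖h₁ z.2.1‖ₑ * ‖h₂ z.2.2‖ₑ) := by
  filter_upwards [Measure.quasiMeasurePreserving_fst.ae
      (Measure.quasiMeasurePreserving_fst.ae (ae_restrict_mem hU.compl)),
    Measure.quasiMeasurePreserving_fst.ae
      (Measure.quasiMeasurePreserving_snd.ae (ae_restrict_mem hV.compl)),
    Measure.quasiMeasurePreserving_snd.ae
      (Measure.quasiMeasurePreserving_fst.ae (ae_restrict_mem hQ₁)),
    Measure.quasiMeasurePreserving_snd.ae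
      (Measure.quasiMeasurePreserving_snd.ae (ae_restrict_mem hQ₂))]
    with ⟨⟨y₁, y₂⟩, x₁, x₂⟩ hy₁ hy₂ hx₁ hx₂
  rw [enorm_mul, enorm_mul]
  gcongr
  exact enorm_doubleDiff_le hC_H hC_K hα₁ hα₂ hlam₁ hlam₂ hK (hρ₁ _ _) (hρ₂ _ _)
    ((hsymm₁ _ _).trans_lt (hQ₁sub hx₁)) ((hsymm₂ _ _).trans_lt (hQ₂sub hx₂))
    (not_lt.1 fun h ↦ hy₁ (hUsub h)) (not_lt.1 fun h ↦ hy₂ (hVsub h))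

theorem lintegral_enorm_doubleDiff_mul_le {X₁ X₂ : Type*} [MeasurableSpace X₁]
    [MeasurableSpace X₂] {ρ₁ : X₁ → X₁ → ℝ} {ρ₂ : X₂ → X₂ → ℝ} {μ₁ : Measure X₁}
    {μ₂ : Measure X₂} {lam₁ : X₁ → ℝ → ℝ} {lam₂ : X₂ → ℝ → ℝ} {K : X₁ × X₂ → X₁ × X₂ → ℂ}
    {xQ₁ : X₁} {xQ₂ : X₂} {Clam₁ Clam₂ C_H C_K α₁ α₂ r₁ r₂ : ℝ}
    {Q₁ U : Set X₁} {Q₂ V : Set X₂} {h₁ : X₁ → ℂ} {h₂ : X₂ → ℂ}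
    (hμ₁ : IsUpperDoubling ρ₁ μ₁ lam₁ Clam₁) (hμ₂ : IsUpperDoubling ρ₂ μ₂ lam₂ Clam₂)
    (hC_H : 0 ≤ C_H) (hC_K : 1 ≤ C_K) (hα₁ : 0 < α₁) (hα₂ : 0 < α₂) (hr₁ : 0 < r₁)
    (hr₂ : 0 < r₂) (hρ₁ : ∀ x y, 0 ≤ ρ₁ x y) (hρ₂ : ∀ x y, 0 ≤ ρ₂ x y)
    (hsymm₁ : ∀ x y, ρ₁ x y = ρ₁ y x) (hsymm₂ : ∀ x y, ρ₂ x y = ρ₂ y x)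
    (hK : ∀ x₁ x₂ y₁ y₂, ρ₁ x₁ xQ₁ ≤ ρ₁ xQ₁ y₁ / C_K → ρ₂ x₂ xQ₂ ≤ ρ₂ xQ₂ y₂ / C_K →
      ‖doubleDiff K xQ₁ xQ₂ (x₁, x₂) (y₁, y₂)‖
        ≤ C_H * (ρ₁ x₁ xQ₁ ^ α₁ / (ρ₁ xQ₁ y₁ ^ α₁ * lam₁ xQ₁ (ρ₁ xQ₁ y₁)))
          * (ρ₂ x₂ xQ₂ ^ α₂ / (ρ₂ xQ₂ y₂ ^ α₂ * lam₂ xQ₂ (ρ₂ xQ₂ y₂))))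
    (hQ₁ : MeasurableSet Q₁) (hQ₂ : MeasurableSet Q₂) (hU : MeasurableSet U)
    (hV : MeasurableSet V) (hQ₁sub : Q₁ ⊆ {y | ρ₁ xQ₁ y < r₁})
    (hQ₂sub : Q₂ ⊆ {y | ρ₂ xQ₂ y < r₂}) (hUsub : {y | ρ₁ xQ₁ y < C_K * r₁} ⊆ U)
    (hVsub : {y | ρ₂ xQ₂ y < C_K * r₂} ⊆ V) (hh₁ : MemLp h₁ 2 μ₁) (hh₂ : MemLp h₂ 2 μ₂) :
    ∫⁻ z, ‖doubleDiff K xQ₁ xQ₂ z.2 z.1 * (h₁ z.2.1 * h₂ z.2.2)‖ₑ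
        ∂((μ₁.restrict Uᶜ).prod (μ₂.restrict Vᶜ)).prod ((μ₁.restrict Q₁).prod (μ₂.restrict Q₂))
      ≤ ENNReal.ofReal C_H * ENNReal.ofReal (tailConst Clam₁ α₁)
          * ENNReal.ofReal (tailConst Clam₂ α₂)
          * (eLpNorm h₁ 2 μ₁ * μ₁ Q₁ ^ (1 / 2 : ℝ) * (eLpNorm h₂ 2 μ₂ * μ₂ Q₂ ^ (1 / 2 : ℝ))) := by
  have := hμ₁.sigmaFinite xQ₁
  have := hμ₂.sigmaFinite xQ₂
  have hfar₁ (y : X₁) (hy : y ∈ Uᶜ) : C_K * r₁ ≤ ρ₁ xQ₁ y := not_lt.1 fun h ↦ hy (hUsub h)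
  have hfar₂ (y : X₂) (hy : y ∈ Vᶜ) : C_K * r₂ ≤ ρ₂ xQ₂ y := not_lt.1 fun h ↦ hy (hVsub h)
  have hQ₁fin : μ₁ Q₁ ≠ ∞ := measure_ne_top_of_subset hQ₁sub (hμ₁.measure_ball_ne_top xQ₁ hr₁)
  have hQ₂fin : μ₂ Q₂ ≠ ∞ := measure_ne_top_of_subset hQ₂sub (hμ₂.measure_ball_ne_top xQ₂ hr₂)
  have hP : ∫⁻ y, ENNReal.ofReal C_H * ENNReal.ofReal (tailWeight ρ₁ lam₁ α₁ (C_K * r₁) xQ₁ y.1)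
        * ENNReal.ofReal (tailWeight ρ₂ lam₂ α₂ (C_K * r₂) xQ₂ y.2)
        ∂(μ₁.restrict Uᶜ).prod (μ₂.restrict Vᶜ)
      ≤ ENNReal.ofReal C_H * ENNReal.ofReal (tailConst Clam₁ α₁)
        * ENNReal.ofReal (tailConst Clam₂ α₂) := by
    refine lintegral_prod_mul_le_mul (f := fun y₁ ↦
        ENNReal.ofReal C_H * ENNReal.ofReal (tailWeight ρ₁ lam₁ α₁ (C_K * r₁) xQ₁ y₁))
      (fun _ ↦ by finiteness) ?_
      (hμ₂.lintegral_tailWeight_le hα₂ (by positivity) xQ₂ hV.compl hfar₂) ENNReal.ofReal_ne_top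
    rw [lintegral_const_mul' _ _ ENNReal.ofReal_ne_top]
    gcongr
    exact hμ₁.lintegral_tailWeight_le hα₁ (by positivity) xQ₁ hU.compl hfar₁
  have hν : ∫⁻ x, ‖h₁ x.1‖ₑ * ‖h₂ x.2‖ₑ ∂(μ₁.restrict Q₁).prod (μ₂.restrict Q₂)
      ≤ eLpNorm h₁ 2 μ₁ * μ₁ Q₁ ^ (1 / 2 : ℝ) * (eLpNorm h₂ 2 μ₂ * μ₂ Q₂ ^ (1 / 2 : ℝ)) :=
    lintegral_prod_mul_le_mul (fun _ ↦ enorm_ne_top)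
      (setLIntegral_enorm_le_eLpNorm_mul_measure_rpow hh₁.1 Q₁)
      (setLIntegral_enorm_le_eLpNorm_mul_measure_rpow hh₂.1 Q₂)
      (by finiteness [hh₂.eLpNorm_ne_top])
  refine (lintegral_mono_ae (ae_enorm_doubleDiff_mul_le hC_H hC_K hα₁.le hα₂.le hμ₁.pos hμ₂.pos
    hρ₁ hρ₂ hsymm₁ hsymm₂ hK hQ₁ hQ₂ hU hV hQ₁sub hQ₂sub hUsub hVsub)).trans
    (lintegral_prod_mul_le_mul (fun _ ↦ by finiteness) hP hν ?_)
  finiteness [hh₁.eLpNorm_ne_top, hh₂.eLpNorm_ne_top]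

/-- the estimate |A₄(U,V)| ≲ μ₁(Q₁)^{1/2} μ₂(Q₂)^{1/2} from the
interpretation of T(1) (Section 2.9 of the paper). -/
theorem A4_estimate
    (C_H Clam₁ Clam₂ α₁ α₂ C_Q C_K : ℝ)
    (hC_H : 0 ≤ C_H) (hClam₁ : 1 ≤ Clam₁) (hClam₂ : 1 ≤ Clam₂)
    (hα₁ : 0 < α₁) (hα₂ : 0 < α₂) (hC_Q : 1 ≤ C_Q) (hC_K : 1 ≤ C_K) :
    ∃ C' : ℝ, 0 < C' ∧
      ∀ (X₁ X₂ : Type) [MeasurableSpace X₁] [MeasurableSpace X₂]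
        (A₀ : ℝ) (ρ₁ : X₁ → X₁ → ℝ) (ρ₂ : X₂ → X₂ → ℝ)
        (μ₁ : Measure X₁) (μ₂ : Measure X₂)
        (lam₁ : X₁ → ℝ → ℝ) (lam₂ : X₂ → ℝ → ℝ)
        (K : X₁ × X₂ → X₁ × X₂ → ℂ)
        (xQ₁ : X₁) (xQ₂ : X₂) (ℓ₁ ℓ₂ : ℝ)
        (Q₁ U : Set X₁) (Q₂ V : Set X₂)
        (h₁ : X₁ → ℂ) (h₂ : X₂ → ℂ),
        1 ≤ A₀ →
        (∀ x y, 0 ≤ ρ₁ x y) → (∀ x y, ρ₁ x y = 0 ↔ x = y) →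
        (∀ x y, ρ₁ x y = ρ₁ y x) → (∀ x y z, ρ₁ x z ≤ A₀ * (ρ₁ x y + ρ₁ y z)) →
        (∀ x y, 0 ≤ ρ₂ x y) → (∀ x y, ρ₂ x y = 0 ↔ x = y) →
        (∀ x y, ρ₂ x y = ρ₂ y x) → (∀ x y z, ρ₂ x z ≤ A₀ * (ρ₂ x y + ρ₂ y z)) →
        (∀ x r, 0 < r → 0 < lam₁ x r) →
        (∀ x r s, 0 < r → r ≤ s → lam₁ x r ≤ lam₁ x s) →
        (∀ x r, 0 < r → lam₁ x (2 * r) ≤ Clam₁ * lam₁ x r) →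
        (∀ x r, 0 < r → μ₁ {y | ρ₁ x y < r} ≤ ENNReal.ofReal (lam₁ x r)) →
        (∀ x r, 0 < r → 0 < lam₂ x r) →
        (∀ x r s, 0 < r → r ≤ s → lam₂ x r ≤ lam₂ x s) →
        (∀ x r, 0 < r → lam₂ x (2 * r) ≤ Clam₂ * lam₂ x r) →
        (∀ x r, 0 < r → μ₂ {y | ρ₂ x y < r} ≤ ENNReal.ofReal (lam₂ x r)) →
        (∀ x₁ x₂ y₁ y₂,
          ρ₁ x₁ xQ₁ ≤ ρ₁ xQ₁ y₁ / C_K → ρ₂ x₂ xQ₂ ≤ ρ₂ xQ₂ y₂ / C_K →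
          ‖K (x₁, x₂) (y₁, y₂) - K (xQ₁, x₂) (y₁, y₂)
              - K (x₁, xQ₂) (y₁, y₂) + K (xQ₁, xQ₂) (y₁, y₂)‖
            ≤ C_H * (ρ₁ x₁ xQ₁ ^ α₁ / (ρ₁ xQ₁ y₁ ^ α₁ * lam₁ xQ₁ (ρ₁ xQ₁ y₁)))
                * (ρ₂ x₂ xQ₂ ^ α₂ / (ρ₂ xQ₂ y₂ ^ α₂ * lam₂ xQ₂ (ρ₂ xQ₂ y₂)))) →
        0 < ℓ₁ → 0 < ℓ₂ →
        MeasurableSet Q₁ → MeasurableSet Q₂ → MeasurableSet U → MeasurableSet V →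
        Q₁ ⊆ {y | ρ₁ xQ₁ y < C_Q * ℓ₁} → Q₂ ⊆ {y | ρ₂ xQ₂ y < C_Q * ℓ₂} →
        {y | ρ₁ xQ₁ y < C_K * C_Q * ℓ₁} ⊆ U → {y | ρ₂ xQ₂ y < C_K * C_Q * ℓ₂} ⊆ V →
        Function.support h₁ ⊆ Q₁ → MemLp h₁ 2 μ₁ → eLpNorm h₁ 2 μ₁ ≤ 1 →
        (∫ x, h₁ x ∂μ₁) = 0 →
        Function.support h₂ ⊆ Q₂ → MemLp h₂ 2 μ₂ → eLpNorm h₂ 2 μ₂ ≤ 1 →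
        (∫ x, h₂ x ∂μ₂) = 0 →
        Integrable (fun q : (X₁ × X₂) × (X₁ × X₂) =>
            K q.2 q.1 * h₁ q.2.1 * h₂ q.2.2)
          (((μ₁.restrict Uᶜ).prod (μ₂.restrict Vᶜ)).prod
            ((μ₁.restrict Q₁).prod (μ₂.restrict Q₂))) →
        Integrable (fun q : (X₁ × X₂) × (X₁ × X₂) =>
            K (xQ₁, q.2.2) q.1 * h₁ q.2.1 * h₂ q.2.2)
          (((μ₁.restrict Uᶜ).prod (μ₂.restrict Vᶜ)).prod
            ((μ₁.restrict Q₁).prod (μ₂.restrict Q₂))) →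
        Integrable (fun q : (X₁ × X₂) × (X₁ × X₂) =>
            K (q.2.1, xQ₂) q.1 * h₁ q.2.1 * h₂ q.2.2)
          (((μ₁.restrict Uᶜ).prod (μ₂.restrict Vᶜ)).prod
            ((μ₁.restrict Q₁).prod (μ₂.restrict Q₂))) →
        Integrable (fun q : (X₁ × X₂) × (X₁ × X₂) =>
            K (xQ₁, xQ₂) q.1 * h₁ q.2.1 * h₂ q.2.2)
          (((μ₁.restrict Uᶜ).prod (μ₂.restrict Vᶜ)).prod
            ((μ₁.restrict Q₁).prod (μ₂.restrict Q₂))) →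
        ‖∫ y₁ in Uᶜ, (∫ y₂ in Vᶜ, (∫ x₁ in Q₁, (∫ x₂ in Q₂,
            K (x₁, x₂) (y₁, y₂) * h₁ x₁ * h₂ x₂ ∂μ₂) ∂μ₁) ∂μ₂) ∂μ₁‖
          ≤ C' * (μ₁ Q₁).toReal ^ ((1 : ℝ) / 2) * (μ₂ Q₂).toReal ^ ((1 : ℝ) / 2) := by
  have ht₁ : 0 < tailConst Clam₁ α₁ := tailConst_pos (by linarith) hα₁
  have ht₂ : 0 < tailConst Clam₂ α₂ := tailConst_pos (by linarith) hα₂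
  refine ⟨(C_H + 1) * tailConst Clam₁ α₁ * tailConst Clam₂ α₂, by positivity, ?_⟩
  intro X₁ X₂ _ _ _ ρ₁ ρ₂ μ₁ μ₂ lam₁ lam₂ K xQ₁ xQ₂ ℓ₁ ℓ₂ Q₁ U Q₂ V h₁ h₂ _ hρ₁ _ hsymm₁ _ hρ₂ _
    hsymm₂ _ hpos₁ hmono₁ hdoub₁ hball₁ hpos₂ hmono₂ hdoub₂ hball₂ hK hℓ₁ hℓ₂ hQ₁ hQ₂ hU hV
    hQ₁sub hQ₂sub hUsub hVsub hsupp₁ hh₁ hnorm₁ hmean₁ hsupp₂ hh₂ hnorm₂ hmean₂ hI hI₁ hI₂ hI₁₂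
  have hμ₁ : IsUpperDoubling ρ₁ μ₁ lam₁ Clam₁ := ⟨hpos₁, hmono₁, hdoub₁, hball₁⟩
  have hμ₂ : IsUpperDoubling ρ₂ μ₂ lam₂ Clam₂ := ⟨hpos₂, hmono₂, hdoub₂, hball₂⟩
  have := hμ₁.sigmaFinite xQ₁
  have := hμ₂.sigmaFinite xQ₂
  have hQ₁fin := measure_ne_top_of_subset hQ₁sub (hμ₁.measure_ball_ne_top xQ₁ (by positivity))
  have hQ₂fin := measure_ne_top_of_subset hQ₂sub (hμ₂.measure_ball_ne_top xQ₂ (by positivity))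
  have hmean₁' : ∫ x in Q₁, h₁ x ∂μ₁ = 0 := by
    rwa [setIntegral_eq_integral_of_forall_compl_eq_zero (Function.support_subset_iff'.1 hsupp₁)]
  have hmean₂' : ∫ x in Q₂, h₂ x ∂μ₂ = 0 := by
    rwa [setIntegral_eq_integral_of_forall_compl_eq_zero (Function.support_subset_iff'.1 hsupp₂)]
  rw [← integral_prod_prod_eq_iterated hI,
    ← integral_doubleDiff_mul_eq xQ₁ xQ₂ hmean₁' hmean₂' hI hI₁ hI₂ hI₁₂, ← toReal_enorm]
  refine (ENNReal.toReal_mono (by finiteness [hh₁.eLpNorm_ne_top, hh₂.eLpNorm_ne_top])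
    ((enorm_integral_le_lintegral_enorm _).trans (lintegral_enorm_doubleDiff_mul_le hμ₁ hμ₂ hC_H
      hC_K hα₁ hα₂ (by positivity) (by positivity) hρ₁ hρ₂ hsymm₁ hsymm₂ hK hQ₁ hQ₂ hU hV hQ₁sub
      hQ₂sub (mul_assoc C_K C_Q ℓ₁ ▸ hUsub) (mul_assoc C_K C_Q ℓ₂ ▸ hVsub) hh₁ hh₂))).trans ?_
  have he₁ := ENNReal.toReal_le_of_le_ofReal zero_le_one (hnorm₁.trans ENNReal.ofReal_one.ge)
  have he₂ := ENNReal.toReal_le_of_le_ofReal zero_le_one (hnorm₂.trans ENNReal.ofReal_one.ge)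
  simp only [ENNReal.toReal_mul, ENNReal.toReal_ofReal hC_H, ENNReal.toReal_ofReal ht₁.le,
    ENNReal.toReal_ofReal ht₂.le, ← ENNReal.toReal_rpow]
  calc _ ≤ (C_H + 1) * tailConst Clam₁ α₁ * tailConst Clam₂ α₂
        * (1 * (μ₁ Q₁).toReal ^ (1 / 2 : ℝ) * (1 * (μ₂ Q₂).toReal ^ (1 / 2 : ℝ))) := by
        gcongr; linarith
    _ = _ := by ring
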